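/- arXiv:1305.4595 — 4 statements merged into one kernel-verified Lean document; each statement's English description precedes it below -/
import Mathlib

section
/- There exist positive real numbers a, b, c, d, e, f such that the real number ad does not lie in the additive subgroup of ℝ generated by the six quantities ad−be, ad−cf, de+df+ef+ad, ab+af+bf+ad, ac+ae+ce+ad, and bc+bd+cd+ad. -/
open AddSubgroup

theorem Int.cast_mem_zmultiples_cast_iff {R : Type*} [Ring R] [CharZero R] {a n : ℤ} :
    (a : R) ∈ zmultiples (n : R) ↔ n ∣ a := by
  constructor
  · rintro ⟨k, hk : k • (n : R) = a⟩
    refine ⟨k, Int.cast_injective (α := R) ?_⟩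
    rw [← hk, zsmul_eq_mul, ← Int.cast_mul, mul_comm]
  · rintro ⟨k, rfl⟩
    rw [Int.cast_mul, Int.cast_comm]
    exact intCast_mul_mem_zmultiples _ _

theorem one_notMem_zmultiples_four : (1 : ℝ) ∉ zmultiples (4 : ℝ) := by
  simpa using (Int.cast_mem_zmultiples_cast_iff (R := ℝ) (a := 1) (n := 4)).not.mpr (by decide)

theorem stmt_3 :
    ∃ a b c d e f : ℝ, 0 < a ∧ 0 < b ∧ 0 < c ∧ 0 < d ∧ 0 < e ∧ 0 < f ∧
      a*d ∉ AddSubgroup.closure ({a*d-b*e, a*d-c*f,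
                          d*e+d*f+e*f+a*d,
                          a*b+a*f+b*f+a*d,
                          a*c+a*e+c*e+a*d,
                          b*c+b*d+c*d+a*d} : Set ℝ) := by
  -- At the all-ones point every generator is 0 or 4, so the lattice lies in 4ℤ while ad = 1.
  refine ⟨1, 1, 1, 1, 1, 1, one_pos, one_pos, one_pos, one_pos, one_pos, one_pos, ?_⟩
  have hgenerators : ({1*1-1*1, 1*1-1*1, 1*1+1*1+1*1+1*1, 1*1+1*1+1*1+1*1, 1*1+1*1+1*1+1*1,
      1*1+1*1+1*1+1*1} : Set ℝ) ⊆ zmultiples (4 : ℝ) := by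
    norm_num [Set.insert_subset_iff, mem_zmultiples, zero_mem]
  simpa using fun h => one_notMem_zmultiples_four ((closure_le _).2 hgenerators h)
end

section
/- For a generic choice of positive reals a, b, c, d, e, f (specifically, outside a countable union of proper affine subvarieties—equivalently for algebraically independent values), ad is not in the ℤ-span of the six 2×2 minors of the K₄ period matrix. -/
/-!
Algebraic independence makes evaluation at `x` injective on `ℚ[X₀, …, X₅]`, so an integer relation
among the real numbers lifts to the same relation among the polynomials. There it fails: an explicit
combination of coefficients, `[ad] + [be] + [cf] - [ab] - [ac] - [bc] - [de]`, vanishes on all six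
minors but equals `1` on `ad`, so `ad` is not even in their `ℚ`-span.
-/

open MvPolynomial

theorem AddSubgroup.mem_closure_image_iff {G N F : Type*} [AddGroup G] [AddGroup N] [FunLike F G N]
    [AddMonoidHomClass F G N] {f : F} (hf : Function.Injective f) {s : Set G} {x : G} :
    f x ∈ AddSubgroup.closure (f '' s) ↔ x ∈ AddSubgroup.closure s := by
  rw [← AddMonoidHom.coe_coe f, ← AddMonoidHom.map_closure,
    AddSubgroup.mem_map_iff_mem (f := (f : G →+ N)) hf]

namespace K4

/-- Up to sign, the six distinct `2 × 2` minors of the symmetric matrix with diagonal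
`a+e+f, b+d+f, c+d+e` and off-diagonal entries `-f, -e, -d`. -/
def minors {R : Type*} [Add R] [Mul R] (a b c d e f : R) : Set R :=
  {a*b+a*d+a*f+b*e+d*e+e*f+b*f+d*f,
   a*d+d*e+d*f+e*f,
   a*c+a*d+a*e+c*e+d*e+c*f+d*f+e*f,
   b*e+d*e+d*f+e*f,
   b*c+b*d+b*e+c*d+d*e+c*f+d*f+e*f,
   c*f+d*f+e*f+d*e}

theorem image_minors {R S F : Type*} [NonUnitalNonAssocSemiring R] [NonUnitalNonAssocSemiring S]
    [FunLike F R S] [NonUnitalRingHomClass F R S] (φ : F) (a b c d e f : R) :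
    φ '' minors a b c d e f = minors (φ a) (φ b) (φ c) (φ d) (φ e) (φ f) := by
  simp [minors, Set.image_insert_eq, Set.image_singleton]

/-- Evaluation at the indicator vector of `{i, j}` reads off the coefficient of `X i * X j` from a
square-free quadratic form, so on such forms this is `[ad] + [be] + [cf] - [ab] - [ac] - [bc] - [de]`. -/
noncomputable def separatingFunctional : MvPolynomial (Fin 6) ℚ →+ ℚ :=
  (eval ![1, 0, 0, 1, 0, 0]).toAddMonoidHom + (eval ![0, 1, 0, 0, 1, 0]).toAddMonoidHom
    + (eval ![0, 0, 1, 0, 0, 1]).toAddMonoidHom - (eval ![1, 1, 0, 0, 0, 0]).toAddMonoidHom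
    - (eval ![1, 0, 1, 0, 0, 0]).toAddMonoidHom - (eval ![0, 1, 1, 0, 0, 0]).toAddMonoidHom
    - (eval ![0, 0, 0, 1, 1, 0]).toAddMonoidHom

theorem minors_subset_ker_separatingFunctional :
    minors (X 0 : MvPolynomial (Fin 6) ℚ) (X 1) (X 2) (X 3) (X 4) (X 5) ⊆
      (separatingFunctional.ker : Set _) := by
  simp [minors, Set.insert_subset_iff, separatingFunctional]

theorem separatingFunctional_X0_mul_X3 : separatingFunctional (X 0 * X 3) = 1 := by
  simp [separatingFunctional]

theorem X0_mul_X3_notMem_closure_minors :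
    (X 0 * X 3 : MvPolynomial (Fin 6) ℚ) ∉
      AddSubgroup.closure (minors (X 0) (X 1) (X 2) (X 3) (X 4) (X 5)) := fun h => by
  have h_ker := (AddSubgroup.closure_le _).2 minors_subset_ker_separatingFunctional h
  simp [AddMonoidHom.mem_ker, separatingFunctional_X0_mul_X3] at h_ker

end K4

theorem stmt_4 (x : Fin 6 → ℝ) (hx : AlgebraicIndependent ℚ x) :
    ∀ a b c d e f : ℝ, a = x 0 → b = x 1 → c = x 2 → d = x 3 → e = x 4 → f = x 5 →
      a*d ∉ AddSubgroup.closure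
        ({a*b+a*d+a*f+b*e+d*e+e*f+b*f+d*f,
          a*d+d*e+d*f+e*f,
          a*c+a*d+a*e+c*e+d*e+c*f+d*f+e*f,
          b*e+d*e+d*f+e*f,
          b*c+b*d+b*e+c*d+d*e+c*f+d*f+e*f,
          c*f+d*f+e*f+d*e} : Set ℝ) := by
  rintro a b c d e f rfl rfl rfl rfl rfl rfl
  have h := K4.X0_mul_X3_notMem_closure_minors
  rw [← AddSubgroup.mem_closure_image_iff hx, K4.image_minors] at h
  simpa only [map_mul, aeval_X, K4.minors] using h
end

section
/- A positive definite quadratic form Q on ℤ^g that can be written as Q = Σᵢ αᵢ (eᵢ)², where αᵢ > 0 and {eᵢ} is a totally unimodular system of linear functionals in the dual lattice, has Voronoi cell equal to a zonotope, namely the Minkowski sum of the segments [-αᵢeᵢ/2, αᵢeᵢ/2] (after identifying functionals with vectors via Q). -/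
/-- The bilinear form `Q(x,y) = Σᵢ αᵢ eᵢ(x) eᵢ(y)` on `ℝ^g` given by scalars `αᵢ`
and integral linear functionals `eᵢ ∈ (ℤ^g)*`. -/
def dicingForm {g m : ℕ} (α : Fin m → ℝ) (e : Fin m → (Fin g → ℤ)) :
    (Fin g → ℝ) → (Fin g → ℝ) → ℝ :=
  fun x y => ∑ i, α i * (∑ j, (e i j : ℝ) * x j) * (∑ j, (e i j : ℝ) * y j)

/-- `{eᵢ}` is totally unimodular: every square minor of the matrix of the
functionals is `0`, `1` or `-1` (equivalently, every subset which is an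
`ℝ`-basis of the dual space is a `ℤ`-basis of the dual lattice). -/
def TotallyUnimodular {g m : ℕ} (e : Fin m → (Fin g → ℤ)) : Prop :=
  ∀ (k : ℕ) (r : Fin k → Fin m) (c : Fin k → Fin g),
    Function.Injective r → Function.Injective c →
      (Matrix.of fun i j => e (r i) (c j)).det ∈ ({0, 1, -1} : Set ℤ)

/-!
A point of the zonotope satisfies the Voronoi inequalities `2 Q(x, l) ≤ Q(l, l)` termwise, since
`2 t n ≤ n²` for `|t| ≤ ½` and `n ∈ ℤ`. Conversely, `w ↦ ½ ∑ αᵢ |eᵢ(w)|` is the support function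
of the zonotope (paired through `Q`), so by Hahn–Banach a point `x` of the Voronoi cell lies in the
zonotope once `Q(x, w) ≤ ½ ∑ αᵢ |eᵢ(w)|` for all `w`. Both sides are linear on each sign cone of
the `eᵢ`, so by Krein–Milman it suffices to check the extreme points of a compact slice of the
cone. Such a point is cut out, up to scaling, by the `eᵢ` vanishing on it; by Cramer's rule and
total unimodularity it is a multiple of an integral `r` with all `eᵢ(r) ∈ {0, ±1}`. For such `r`,
`Q(r, r) = ∑ αᵢ |eᵢ(r)|`, and the bound is the Voronoi inequality at `±r`.
-/

open Matrix

theorem Matrix.dotProduct_adjugate_col {n R : Type*} [Fintype n] [DecidableEq n] [CommRing R]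
    (A : Matrix n n R) (k : n) (y : n → R) :
    y ⬝ᵥ (fun j => A.adjugate j k) = (A.updateRow k y).det := by
  rw [← cramer_transpose_apply, cramer_eq_adjugate_mulVec, ← adjugate_transpose]
  simp only [mulVec, dotProduct, transpose_apply, mul_comm]

theorem Matrix.det_smul_eq_smul_adjugate_col {n R : Type*} [Fintype n] [DecidableEq n]
    [CommRing R] {B : Matrix n n R} {w : n → R} {k : n} {a : R}
    (hw : B *ᵥ w = Pi.single k a) :
    B.det • w = a • fun j => B.adjugate j k := by
  rw [← one_mulVec w, ← smul_mulVec, ← adjugate_mul, ← mulVec_mulVec, hw, mulVec_single]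
  ext j
  simp [mul_comm]

theorem Matrix.exists_submatrix_det_ne_zero {K ι n : Type*} [Field K] [Fintype ι] [Fintype n]
    [DecidableEq n] (A : Matrix ι n K) {w : n → K} {j₀ : ι} (hj₀ : (A *ᵥ w) j₀ ≠ 0)
    (hker : ∀ d, (∀ i, (A *ᵥ w) i = 0 → (A *ᵥ d) i = 0) → ∃ c : K, d = c • w) :
    ∃ (ρ : n → ι) (k : n), ρ k = j₀ ∧ (∀ i ≠ k, (A *ᵥ w) (ρ i) = 0) ∧
      (A.submatrix ρ id).det ≠ 0 := by
  classical
  have hA₀ : A j₀ ≠ 0 := fun h => hj₀ (by simp [mulVec, h])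
  obtain ⟨b, hbt, hj₀b, hspan, hli⟩ := exists_linearIndepOn_extension
    ((linearIndepOn_singleton_iff K).2 hA₀) (Set.singleton_subset_iff.2 (Set.mem_insert j₀
      {i | (A *ᵥ w) i = 0}))
  have hb_inj : Function.Injective (A.submatrix ((↑) : b → ι) id).mulVecLin := by
    rw [← LinearMap.ker_eq_bot, LinearMap.ker_eq_bot']
    intro d hd
    have hrow : ∀ i ∈ insert j₀ {i | (A *ᵥ w) i = 0}, (A *ᵥ d) i = 0 := by
      have hle : Submodule.span K (A '' b) ≤ LinearMap.ker (dotProductBilin K K d) := by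
        rw [Submodule.span_le]
        rintro _ ⟨i, hi, rfl⟩
        simpa [mulVec, dotProduct_comm] using congrFun hd ⟨i, hi⟩
      intro i hi
      simpa [mulVec, dotProduct_comm] using hle (hspan ⟨i, hi, rfl⟩)
    obtain ⟨c, rfl⟩ := hker d fun i hi => hrow i (Set.mem_insert_of_mem _ hi)
    have := hrow j₀ (Set.mem_insert _ _)
    rw [mulVec_smul, Pi.smul_apply, smul_eq_mul, mul_eq_zero] at this
    simp [this.resolve_right hj₀]
  have hcard : Fintype.card b = Fintype.card n := by
    refine le_antisymm ?_ ?_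
    · simpa using hli.fintype_card_le_finrank
    · simpa using LinearMap.finrank_le_finrank_of_injective hb_inj
  let eqv := Fintype.equivOfCardEq hcard
  refine ⟨(↑) ∘ eqv.symm, eqv ⟨j₀, hj₀b rfl⟩, by simp, fun i hi => ?_, ?_⟩
  · have hne : (eqv.symm i : ι) ≠ j₀ := fun h => hi (by
      rw [← Equiv.apply_symm_apply eqv i]
      exact congrArg eqv (Subtype.ext h : eqv.symm i = ⟨j₀, hj₀b rfl⟩))
    exact ((hbt (eqv.symm i).2).resolve_left hne :)
  · rw [← isUnit_iff_ne_zero, ← isUnit_iff_isUnit_det, ← linearIndependent_rows_iff_isUnit]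
    exact hli.comp _ eqv.symm.injective

section TotallyUnimodular

variable {g m : ℕ} {e : Fin m → Fin g → ℤ}

def realMatrix (e : Fin m → Fin g → ℤ) : Matrix (Fin m) (Fin g) ℝ :=
  (Matrix.of e).map (↑)

theorem realMatrix_mulVec_intCast (r : Fin g → ℤ) :
    realMatrix e *ᵥ (fun j => (r j : ℝ)) = fun i => ((Matrix.of e *ᵥ r) i : ℝ) := by
  ext i
  simp [realMatrix, mulVec, dotProduct]

theorem TotallyUnimodular.det_mem (hTU : TotallyUnimodular e) {k : ℕ} (r : Fin k → Fin m)
    {c : Fin k → Fin g} (hc : Function.Injective c) :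
    (Matrix.of fun i j => e (r i) (c j)).det ∈ ({0, 1, -1} : Set ℤ) := by
  by_cases hr : Function.Injective r
  · exact hTU k r c hr hc
  · obtain ⟨i, j, hij, hne⟩ : ∃ i j, r i = r j ∧ i ≠ j := by
      simpa [Function.Injective] using hr
    exact Or.inl (det_zero_of_row_eq hne (funext fun l => by simp [hij]))

/-- By Laplace expansion along row `k`, the `i`-th coordinate is the minor of `e` obtained by
replacing row `k` of `e ∘ ρ` by `e i`. -/
theorem TotallyUnimodular.mulVec_adjugate_col_mem (hTU : TotallyUnimodular e)
    (ρ : Fin g → Fin m) (k : Fin g) (i : Fin m) :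
    (Matrix.of e *ᵥ fun j => ((Matrix.of e).submatrix ρ id).adjugate j k) i
      ∈ ({0, 1, -1} : Set ℤ) := by
  have hrow : ((Matrix.of e).submatrix ρ id).updateRow k (e i)
      = Matrix.of fun a b => e (Function.update ρ k i a) (id b) := by
    ext a b
    by_cases h : a = k
    · subst h; simp
    · simp [updateRow_ne h, Function.update_of_ne h]
  change e i ⬝ᵥ _ ∈ _
  rw [dotProduct_adjugate_col, hrow]
  exact hTU.det_mem _ Function.injective_id

theorem TotallyUnimodular.exists_eq_smul_of_ker (hTU : TotallyUnimodular e) {w : Fin g → ℝ}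
    {j₀ : Fin m} (hj₀ : (realMatrix e *ᵥ w) j₀ ≠ 0)
    (hker : ∀ d, (∀ i, (realMatrix e *ᵥ w) i = 0 → (realMatrix e *ᵥ d) i = 0) →
      ∃ c : ℝ, d = c • w) :
    ∃ (r : Fin g → ℤ) (c : ℝ), w = c • (fun j => (r j : ℝ)) ∧
      ∀ i, (Matrix.of e *ᵥ r) i ∈ ({0, 1, -1} : Set ℤ) := by
  obtain ⟨ρ, k, rfl, hρ, hdet⟩ := (realMatrix e).exists_submatrix_det_ne_zero hj₀ hker
  set B := (Matrix.of e).submatrix ρ id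
  have hBℝ : (realMatrix e).submatrix ρ id = (Int.castRingHom ℝ).mapMatrix B := rfl
  have hBw : (realMatrix e).submatrix ρ id *ᵥ w = Pi.single k ((realMatrix e *ᵥ w) (ρ k)) := by
    ext i
    by_cases hi : i = k
    · subst hi; simp [mulVec]
    · simpa [hi, mulVec] using hρ i hi
  have hcramer := det_smul_eq_smul_adjugate_col hBw
  rw [hBℝ, ← RingHom.map_adjugate, ← RingHom.map_det] at hcramer
  replace hdet : (B.det : ℝ) ≠ 0 := by rwa [hBℝ, ← RingHom.map_det] at hdet
  refine ⟨fun j => B.adjugate j k, (realMatrix e *ᵥ w) (ρ k) / (B.det : ℝ), ?_,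
    hTU.mulVec_adjugate_col_mem ρ k⟩
  rw [div_eq_inv_mul, mul_smul, eq_inv_smul_iff₀ hdet]
  exact hcramer

end TotallyUnimodular

section PosSlice

open Filter Topology

variable {ι V : Type*} [Fintype ι] [NormedAddCommGroup V] [NormedSpace ℝ V]
  {φ : ι → V →ₗ[ℝ] ℝ} {α : ι → ℝ}

def posSlice (φ : ι → V →ₗ[ℝ] ℝ) (α : ι → ℝ) : Set V :=
  (⋂ i, {q | 0 ≤ φ i q}) ∩ {q | (∑ i, α i • φ i) q = 1}

theorem mem_posSlice {q : V} :
    q ∈ posSlice φ α ↔ (∀ i, 0 ≤ φ i q) ∧ (∑ i, α i • φ i) q = 1 := by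
  simp [posSlice]

theorem convex_posSlice : Convex ℝ (posSlice φ α) :=
  (convex_iInter fun i => convex_halfSpace_ge (φ i).isLinear 0).inter
    (convex_hyperplane (LinearMap.isLinear _) 1)

theorem isCompact_posSlice [FiniteDimensional ℝ V] (hα : ∀ i, 0 < α i)
    (hφ : ∀ q, (∀ i, φ i q = 0) → q = 0) : IsCompact (posSlice φ α) := by
  have hclosed : IsClosed (posSlice φ α) :=
    (isClosed_iInter fun i => isClosed_le continuous_const
      (φ i).continuous_of_finiteDimensional).inter
      (isClosed_eq (LinearMap.continuous_of_finiteDimensional _) continuous_const)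
  have hinj : Function.Injective (LinearMap.pi φ) := by
    rw [← LinearMap.ker_eq_bot, LinearMap.ker_eq_bot']
    exact fun q hq => hφ q fun i => congrFun hq i
  obtain ⟨K, -, hK⟩ := (LinearMap.pi φ).injective_iff_antilipschitz.1 hinj
  have hsub : posSlice φ α ⊆ LinearMap.pi φ ⁻¹' Set.Icc 0 fun i => (α i)⁻¹ := by
    intro q hq
    obtain ⟨hq0, hq1⟩ := mem_posSlice.1 hq
    refine ⟨hq0, fun i => ?_⟩
    show φ i q ≤ (α i)⁻¹
    rw [← mul_one (α i)⁻¹, le_inv_mul_iff₀ (hα i), ← hq1]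
    simpa using Finset.single_le_sum (f := fun i => α i * φ i q)
      (fun j _ => mul_nonneg (hα j).le (hq0 j)) (Finset.mem_univ i)
  exact Metric.isCompact_of_isClosed_isBounded hclosed
    ((hK.isBounded_preimage (Metric.isBounded_Icc _ _)).subset hsub)

/-- Otherwise `q` could be moved both ways along a common zero `d` of the `φᵢ` vanishing at `q`
without leaving the slice. -/
theorem eq_smul_of_mem_extremePoints_posSlice {q d : V}
    (hq : q ∈ (posSlice φ α).extremePoints ℝ) (hd : ∀ i, φ i q = 0 → φ i d = 0) :
    ∃ c : ℝ, d = c • q := by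
  obtain ⟨hqK, hext⟩ := mem_extremePoints.1 hq
  obtain ⟨hq0, hq1⟩ := mem_posSlice.1 hqK
  set ψ := ∑ i, α i • φ i
  refine ⟨ψ d, ?_⟩
  set d' := d - ψ d • q
  have hψ : ψ d' = 0 := by simp [d', hq1]
  have hd' : ∀ i, φ i q = 0 → φ i d' = 0 := fun i hi => by simp [d', hi, hd i hi]
  have hnear : ∀ᶠ t in 𝓝 (0 : ℝ), q + t • d' ∈ posSlice φ α := by
    have hpos : ∀ i, ∀ᶠ t in 𝓝 (0 : ℝ), 0 ≤ φ i (q + t • d') := by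
      intro i
      rcases (hq0 i).eq_or_lt with h | h
      · exact Eventually.of_forall fun t => by simp [← h, hd' i h.symm]
      · have hlim : Tendsto (fun t : ℝ => φ i q + t * φ i d') (𝓝 0) (𝓝 (φ i q)) := by
          simpa using ((continuous_mul_const (φ i d')).const_add (φ i q)).tendsto 0
        filter_upwards [hlim.eventually (lt_mem_nhds h)] with t ht
        simpa using ht.le
    filter_upwards [eventually_all.2 hpos] with t ht
    exact mem_posSlice.2 ⟨ht, by rw [map_add, map_smul, hq1, hψ, smul_zero, add_zero]⟩
  obtain ⟨δ, hδ, hball⟩ := Metric.eventually_nhds_iff.1 hnear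
  have hδ' : |δ / 2| < δ := by rw [abs_of_pos (half_pos hδ)]; linarith
  have hright := @hball (δ / 2) (by rwa [Real.dist_0_eq_abs])
  have hleft := @hball (-(δ / 2)) (by rwa [Real.dist_0_eq_abs, abs_neg])
  have hseg : q ∈ openSegment ℝ (q + (-(δ / 2)) • d') (q + (δ / 2) • d') :=
    ⟨1 / 2, 1 / 2, by norm_num, by norm_num, by norm_num, by module⟩
  have hzero : (δ / 2) • d' = 0 := add_eq_left.1 (hext _ hleft _ hright hseg).2
  rw [smul_eq_zero, or_iff_right (half_pos hδ).ne'] at hzero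
  exact sub_eq_zero.1 hzero

end PosSlice

theorem LinearMap.nonneg_of_nonneg_on_extremePoints {V : Type*} [NormedAddCommGroup V]
    [NormedSpace ℝ V] [FiniteDimensional ℝ V] {K : Set V} (hK : IsCompact K)
    (hconv : Convex ℝ K) (f : V →ₗ[ℝ] ℝ) (hf : ∀ q ∈ K.extremePoints ℝ, 0 ≤ f q) {q : V}
    (hq : q ∈ K) : 0 ≤ f q := by
  rw [← closure_convexHull_extremePoints hK hconv] at hq
  exact closure_minimal (convexHull_min hf (convex_halfSpace_ge f.isLinear 0))
    (isClosed_le continuous_const f.continuous_of_finiteDimensional) hq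

section Dicing

variable {g m : ℕ} {α : Fin m → ℝ} {e : Fin m → Fin g → ℤ}

theorem dicingForm_eq_sum (x y : Fin g → ℝ) :
    dicingForm α e x y = ∑ i, α i * (realMatrix e *ᵥ x) i * (realMatrix e *ᵥ y) i :=
  rfl

variable (α e) in
def dicingBilin : LinearMap.BilinForm ℝ (Fin g → ℝ) :=
  LinearMap.mk₂ ℝ (dicingForm α e)
    (fun x y z => by
      simp only [dicingForm_eq_sum, mulVec_add, Pi.add_apply, mul_add, add_mul,
        Finset.sum_add_distrib])
    (fun c x y => by
      simp only [dicingForm_eq_sum, mulVec_smul, Pi.smul_apply, smul_eq_mul, Finset.mul_sum]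
      exact Finset.sum_congr rfl fun i _ => by ring)
    (fun x y z => by
      simp only [dicingForm_eq_sum, mulVec_add, Pi.add_apply, mul_add, Finset.sum_add_distrib])
    (fun c x y => by
      simp only [dicingForm_eq_sum, mulVec_smul, Pi.smul_apply, smul_eq_mul, Finset.mul_sum]
      exact Finset.sum_congr rfl fun i _ => by ring)

theorem dicingBilin_apply (x y : Fin g → ℝ) : dicingBilin α e x y = dicingForm α e x y :=
  rfl

theorem dicingForm_comm (x y : Fin g → ℝ) : dicingForm α e x y = dicingForm α e y x := by
  rw [dicingForm_eq_sum, dicingForm_eq_sum]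
  exact Finset.sum_congr rfl fun i _ => by ring

theorem dicingForm_sub_sub (x y : Fin g → ℝ) :
    dicingForm α e (x - y) (x - y)
      = dicingForm α e x x - 2 * dicingForm α e x y + dicingForm α e y y := by
  rw [← dicingBilin_apply]
  simp only [map_sub, LinearMap.sub_apply, dicingBilin_apply]
  rw [dicingForm_comm y x]
  ring

theorem eq_zero_of_realMatrix_mulVec_eq_zero
    (hpos : ∀ x : Fin g → ℝ, x ≠ 0 → 0 < dicingForm α e x x) {x : Fin g → ℝ}
    (hx : realMatrix e *ᵥ x = 0) : x = 0 := by
  by_contra hne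
  simpa [dicingForm_eq_sum, hx] using hpos x hne

theorem dicingBilin_nondegenerate (hpos : ∀ x : Fin g → ℝ, x ≠ 0 → 0 < dicingForm α e x x) :
    (dicingBilin α e).Nondegenerate := by
  refine ⟨fun x hx => ?_, fun x hx => ?_⟩ <;>
  · by_contra hne
    exact (hpos x hne).ne' (hx x)

theorem dicingForm_smul_le_half_sum_abs {x : Fin g → ℝ}
    (hx : ∀ l : Fin g → ℤ, 2 * dicingForm α e x (fun j => (l j : ℝ))
      ≤ dicingForm α e (fun j => (l j : ℝ)) (fun j => (l j : ℝ)))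
    {r : Fin g → ℤ} (hr : ∀ i, (Matrix.of e *ᵥ r) i ∈ ({0, 1, -1} : Set ℤ)) (c : ℝ) :
    dicingForm α e x (c • fun j => (r j : ℝ))
      ≤ 1 / 2 * ∑ i, α i * |(realMatrix e *ᵥ c • fun j => (r j : ℝ)) i| := by
  set R : Fin g → ℝ := fun j => (r j : ℝ)
  have hRR : dicingForm α e R R = ∑ i, α i * |(realMatrix e *ᵥ R) i| := by
    rw [dicingForm_eq_sum, realMatrix_mulVec_intCast]
    refine Finset.sum_congr rfl fun i _ => ?_
    rcases hr i with h | h | h <;> simp [Set.mem_singleton_iff.1 h]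
  have hneg : 2 * -dicingForm α e x R ≤ dicingForm α e R R := by
    have hnegR : (fun j => ((-r) j : ℝ)) = -R := by ext; simp [R]
    have := hx (-r)
    simp only [hnegR, ← dicingBilin_apply, map_neg, LinearMap.neg_apply, neg_neg] at this
    simpa only [dicingBilin_apply] using this
  have habs : |dicingForm α e x R| ≤ 1 / 2 * dicingForm α e R R :=
    abs_le.2 ⟨by linarith, by linarith [hx r]⟩
  calc dicingForm α e x (c • R) = c * dicingForm α e x R := by
        rw [← dicingBilin_apply, map_smul, smul_eq_mul, dicingBilin_apply]
    _ ≤ |c| * |dicingForm α e x R| := by rw [← abs_mul]; exact le_abs_self _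
    _ ≤ |c| * (1 / 2 * dicingForm α e R R) := mul_le_mul_of_nonneg_left habs (abs_nonneg c)
    _ = 1 / 2 * ∑ i, α i * |(realMatrix e *ᵥ c • R) i| := by
        simp only [hRR, mulVec_smul, Pi.smul_apply, smul_eq_mul, abs_mul, Finset.mul_sum]
        exact Finset.sum_congr rfl fun i _ => by ring

variable (e) in
def signedRows (σ : Fin m → ℝ) : Fin m → (Fin g → ℝ) →ₗ[ℝ] ℝ :=
  fun i => σ i • (LinearMap.proj i ∘ₗ (realMatrix e).mulVecLin)

theorem signedRows_apply (σ : Fin m → ℝ) (i : Fin m) (q : Fin g → ℝ) :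
    signedRows e σ i q = σ i * (realMatrix e *ᵥ q) i :=
  rfl

theorem signedRows_eq_zero_iff {σ : Fin m → ℝ} (hσ : ∀ i, |σ i| = 1) (i : Fin m)
    (q : Fin g → ℝ) : signedRows e σ i q = 0 ↔ (realMatrix e *ᵥ q) i = 0 := by
  rw [signedRows_apply, mul_eq_zero, or_iff_right]
  exact fun h => by simpa [h] using hσ i

theorem signedRows_eq_abs {σ : Fin m → ℝ} (hσ : ∀ i, |σ i| = 1) {i : Fin m} {q : Fin g → ℝ}
    (hq : 0 ≤ signedRows e σ i q) : signedRows e σ i q = |(realMatrix e *ᵥ q) i| := by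
  rw [← abs_of_nonneg hq, signedRows_apply, abs_mul, hσ, one_mul]

theorem dicingForm_le_half_sum_abs_of_mem_extremePoints (hTU : TotallyUnimodular e)
    (hE : ∀ q, realMatrix e *ᵥ q = 0 → q = 0) {x : Fin g → ℝ}
    (hx : ∀ l : Fin g → ℤ, 2 * dicingForm α e x (fun j => (l j : ℝ))
      ≤ dicingForm α e (fun j => (l j : ℝ)) (fun j => (l j : ℝ)))
    {σ : Fin m → ℝ} (hσ : ∀ i, |σ i| = 1) {q : Fin g → ℝ}
    (hq : q ∈ (posSlice (signedRows e σ) α).extremePoints ℝ) :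
    dicingForm α e x q ≤ 1 / 2 * ∑ i, α i * |(realMatrix e *ᵥ q) i| := by
  obtain ⟨j₀, hj₀⟩ : ∃ j, (realMatrix e *ᵥ q) j ≠ 0 := by
    by_contra! h
    simpa [hE q (funext h)] using (mem_posSlice.1 hq.1).2
  obtain ⟨r, c, rfl, hr⟩ := hTU.exists_eq_smul_of_ker hj₀ fun d hd =>
    eq_smul_of_mem_extremePoints_posSlice hq fun i hi =>
      (signedRows_eq_zero_iff hσ i d).2 (hd i ((signedRows_eq_zero_iff hσ i _).1 hi))
  exact dicingForm_smul_le_half_sum_abs hx hr c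

theorem dicingForm_le_half_sum_abs (hα : ∀ i, 0 < α i) (hTU : TotallyUnimodular e)
    (hE : ∀ q, realMatrix e *ᵥ q = 0 → q = 0) {x : Fin g → ℝ}
    (hx : ∀ l : Fin g → ℤ, 2 * dicingForm α e x (fun j => (l j : ℝ))
      ≤ dicingForm α e (fun j => (l j : ℝ)) (fun j => (l j : ℝ)))
    (w : Fin g → ℝ) :
    dicingForm α e x w ≤ 1 / 2 * ∑ i, α i * |(realMatrix e *ᵥ w) i| := by
  set σ : Fin m → ℝ := fun i => if 0 ≤ (realMatrix e *ᵥ w) i then 1 else -1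
  have hσ : ∀ i, |σ i| = 1 := fun i => by simp only [σ]; split_ifs <;> simp
  set φ := signedRows e σ
  have hw : ∀ i, 0 ≤ φ i w := fun i => by
    rw [signedRows_apply]; simp only [σ]; split_ifs with h <;> linarith
  set F : (Fin g → ℝ) →ₗ[ℝ] ℝ := (1 / 2 : ℝ) • (∑ i, α i • φ i) - dicingBilin α e x
  have hF : ∀ q, (∀ i, 0 ≤ φ i q) →
      F q = 1 / 2 * ∑ i, α i * |(realMatrix e *ᵥ q) i| - dicingForm α e x q := fun q hq => by
    have habs : ∀ i, φ i q = |(realMatrix e *ᵥ q) i| := fun i => signedRows_eq_abs hσ (hq i)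
    simp [F, habs, dicingBilin_apply]
  have hK : IsCompact (posSlice φ α) := isCompact_posSlice hα fun q hq =>
    hE q (funext fun i => (signedRows_eq_zero_iff hσ i q).1 (hq i))
  have hext : ∀ q ∈ (posSlice φ α).extremePoints ℝ, 0 ≤ F q := fun q hq => by
    rw [hF q (mem_posSlice.1 hq.1).1, sub_nonneg]
    exact dicingForm_le_half_sum_abs_of_mem_extremePoints hTU hE hx hσ hq
  set s := ∑ i, α i * |(realMatrix e *ᵥ w) i|
  have hs : 0 ≤ s := Finset.sum_nonneg fun i _ => mul_nonneg (hα i).le (abs_nonneg _)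
  rcases hs.eq_or_lt with hs | hs
  · have : realMatrix e *ᵥ w = 0 := funext fun i => by
      have := (Finset.sum_eq_zero_iff_of_nonneg fun i _ =>
        mul_nonneg (hα i).le (abs_nonneg _)).1 hs.symm i (Finset.mem_univ i)
      simpa [(hα i).ne'] using this
    rw [hE w this, ← hs, ← dicingBilin_apply, map_zero]
    norm_num
  · have hmem : s⁻¹ • w ∈ posSlice φ α := by
      refine mem_posSlice.2 ⟨fun i => ?_, ?_⟩
      · rw [map_smul, smul_eq_mul]; exact mul_nonneg (inv_nonneg.2 hs.le) (hw i)
      · simp [signedRows_eq_abs hσ (hw _), s, hs.ne', φ]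
    have := LinearMap.nonneg_of_nonneg_on_extremePoints hK convex_posSlice F hext hmem
    rw [map_smul, smul_eq_mul, hF w hw] at this
    linarith [nonneg_of_mul_nonneg_right this (inv_pos.2 hs)]

theorem exists_mem_Icc_of_forall_le (hpos : ∀ x : Fin g → ℝ, x ≠ 0 → 0 < dicingForm α e x x)
    {v : Fin m → Fin g → ℝ}
    (hv : ∀ i (y : Fin g → ℝ), dicingForm α e (v i) y = ∑ j, (e i j : ℝ) * y j)
    {x : Fin g → ℝ}
    (hsupp : ∀ w, dicingForm α e x w ≤ 1 / 2 * ∑ i, α i * |(realMatrix e *ᵥ w) i|) :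
    ∃ t : Fin m → ℝ, (∀ i, t i ∈ Set.Icc (-(1 : ℝ) / 2) (1 / 2)) ∧ x = ∑ i, (t i * α i) • v i := by
  let L : (Fin m → ℝ) →ₗ[ℝ] (Fin g → ℝ) := Fintype.linearCombination ℝ fun i => α i • v i
  have hL : ∀ t, L t = ∑ i, (t i * α i) • v i := fun t => by
    simp [L, Fintype.linearCombination_apply, mul_smul]
  set box := Set.Icc (fun _ : Fin m => -(1 : ℝ) / 2) fun _ => 1 / 2
  suffices hx : x ∈ L '' box by
    obtain ⟨t, ht, rfl⟩ := hx
    exact ⟨t, fun i => ⟨ht.1 i, ht.2 i⟩, hL t⟩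
  by_contra hx
  obtain ⟨f, u, hfZ, hfx⟩ := geometric_hahn_banach_closed_point
    ((convex_Icc _ _).linear_image L)
    (isCompact_Icc.image L.continuous_of_finiteDimensional).isClosed hx
  set w := ((dicingBilin α e).toDual (dicingBilin_nondegenerate hpos)).symm f.toLinearMap
  have hw : ∀ y, f y = dicingForm α e w y := fun y => by
    rw [← dicingBilin_apply, ← LinearMap.BilinForm.toDual_def (dicingBilin_nondegenerate hpos),
      LinearEquiv.apply_symm_apply]
    rfl
  let t : Fin m → ℝ := fun i => if 0 ≤ (realMatrix e *ᵥ w) i then 1 / 2 else -1 / 2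
  have ht : t ∈ box := ⟨fun i => by simp only [t]; split_ifs <;> norm_num,
    fun i => by simp only [t]; split_ifs <;> norm_num⟩
  have hfLt : f (L t) = 1 / 2 * ∑ i, α i * |(realMatrix e *ᵥ w) i| := by
    rw [hw, hL, ← dicingBilin_apply, map_sum, Finset.mul_sum]
    refine Finset.sum_congr rfl fun i _ => ?_
    rw [map_smul, dicingBilin_apply, dicingForm_comm, hv, smul_eq_mul]
    change _ * (realMatrix e *ᵥ w) i = _
    simp only [t]
    split_ifs with h
    · rw [abs_of_nonneg h]; ring
    · rw [abs_of_neg (not_le.1 h)]; ring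
  linarith [hfZ _ ⟨t, ht, rfl⟩, hsupp w, hw x, dicingForm_comm (α := α) (e := e) x w]

theorem dicingForm_le_sub_iff (x y : Fin g → ℝ) :
    dicingForm α e x x ≤ dicingForm α e (x - y) (x - y) ↔
      2 * dicingForm α e x y ≤ dicingForm α e y y := by
  rw [dicingForm_sub_sub]
  constructor <;> intro h <;> linarith

theorem two_mul_mul_le_mul_self_of_mem_Icc {t : ℝ} (ht : t ∈ Set.Icc (-(1 : ℝ) / 2) (1 / 2))
    (n : ℤ) : 2 * (t * n) ≤ n * n := by
  obtain ⟨ht₁, ht₂⟩ := ht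
  rcases lt_trichotomy n 0 with h | rfl | h
  · have : (n : ℝ) ≤ -1 := by exact_mod_cast Int.le_sub_one_of_lt h
    nlinarith
  · simp
  · have : (1 : ℝ) ≤ n := by exact_mod_cast h
    nlinarith

theorem two_mul_dicingForm_sum_le (hα : ∀ i, 0 ≤ α i) {v : Fin m → Fin g → ℝ}
    (hv : ∀ i (y : Fin g → ℝ), dicingForm α e (v i) y = ∑ j, (e i j : ℝ) * y j)
    {t : Fin m → ℝ} (ht : ∀ i, t i ∈ Set.Icc (-(1 : ℝ) / 2) (1 / 2)) (l : Fin g → ℤ) :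
    2 * dicingForm α e (∑ i, (t i * α i) • v i) (fun j => (l j : ℝ))
      ≤ dicingForm α e (fun j => (l j : ℝ)) (fun j => (l j : ℝ)) := by
  rw [← dicingBilin_apply, map_sum, LinearMap.sum_apply, Finset.mul_sum,
    dicingForm_eq_sum _ (fun j => (l j : ℝ)), realMatrix_mulVec_intCast]
  refine Finset.sum_le_sum fun i _ => ?_
  rw [map_smul, LinearMap.smul_apply, dicingBilin_apply, hv, smul_eq_mul]
  change 2 * (t i * α i * (realMatrix e *ᵥ fun j => (l j : ℝ)) i) ≤ _
  rw [realMatrix_mulVec_intCast]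
  nlinarith [mul_le_mul_of_nonneg_left (two_mul_mul_le_mul_self_of_mem_Icc (ht i)
    ((Matrix.of e *ᵥ l) i)) (hα i)]

end Dicing

theorem stmt_8 {g m : ℕ} (α : Fin m → ℝ) (hα : ∀ i, 0 < α i)
    (e : Fin m → (Fin g → ℤ)) (hTU : TotallyUnimodular e)
    (hpos : ∀ x : Fin g → ℝ, x ≠ 0 → 0 < dicingForm α e x x)
    -- `v i` is the vector representing the functional `e i` via `Q`
    (v : Fin m → (Fin g → ℝ))
    (hv : ∀ i (y : Fin g → ℝ), dicingForm α e (v i) y = ∑ j, (e i j : ℝ) * y j) :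
    -- the Voronoi cell of the lattice `ℤ^g` equals the zonotope
    -- `Σᵢ [-αᵢvᵢ/2, αᵢvᵢ/2]`
    {x : Fin g → ℝ | ∀ l : Fin g → ℤ,
        dicingForm α e x x ≤
          dicingForm α e (x - fun j => (l j : ℝ)) (x - fun j => (l j : ℝ))}
      =
    {x : Fin g → ℝ | ∃ t : Fin m → ℝ,
        (∀ i, t i ∈ Set.Icc (-(1:ℝ)/2) (1/2)) ∧ x = ∑ i, (t i * α i) • v i} := by
  ext x
  simp only [Set.mem_ofPred_eq, dicingForm_le_sub_iff]
  constructor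
  · intro hx
    exact exists_mem_Icc_of_forall_le hpos hv <| dicingForm_le_half_sum_abs hα hTU
      (fun _ => eq_zero_of_realMatrix_mulVec_eq_zero hpos) hx
  · rintro ⟨t, ht, rfl⟩ l
    exact two_mul_dicingForm_sum_le (fun i => (hα i).le) hv ht l
end

section
/- The polynomial ad ∈ ℤ[a,b,c,d,e,f] is not an integer linear combination of the six 2×2-minor polynomials of the K₄ period matrix: ab+ad+af+be+de+ef+bf+df, ad+de+df+ef, ac+ad+ae+ce+de+cf+df+ef, be+de+df+ef, bc+bd+be+cd+de+cf+df+ef, cf+df+ef+de. -/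
open MvPolynomial

/-- The six 2×2 minors (up to sign) of the K₄ period matrix, as polynomials in
`ℤ[a,b,c,d,e,f]` with `a = X 0, …, f = X 5`. -/
noncomputable def K4minors : Fin 6 → MvPolynomial (Fin 6) ℤ :=
  fun i =>
    let a := X (0 : Fin 6); let b := X (1 : Fin 6); let c := X (2 : Fin 6)
    let d := X (3 : Fin 6); let e := X (4 : Fin 6); let f := X (5 : Fin 6)
    ![a*b+a*d+a*f+b*e+d*e+e*f+b*f+d*f,
      a*d+d*e+d*f+e*f,
      a*c+a*d+a*e+c*e+d*e+c*f+d*f+e*f,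
      b*e+d*e+d*f+e*f,
      b*c+b*d+b*e+c*d+d*e+c*f+d*f+e*f,
      c*f+d*f+e*f+d*e] i

/-!
Every polynomial involved is a sum of products of two distinct variables, so evaluating it at
the indicator vector of `{i, j}` reads off its coefficient of `x_i x_j`. The weighted sum of such
evaluations `ad + be + cf - ab - ac - bc - de` (a solution of the dual linear system) is a linear
functional that kills all six minors but takes the value `1` on `ad`.
-/

theorem not_exists_eq_sum_smul_of_linearMap {R M N ι : Type*} [Semiring R] [AddCommMonoid M]
    [Module R M] [AddCommMonoid N] [Module R N] [Fintype ι] (f : M →ₗ[R] N) {v : ι → M}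
    (hv : ∀ i, f (v i) = 0) {w : M} (hw : f w ≠ 0) : ¬ ∃ c : ι → R, w = ∑ i, c i • v i := by
  rintro ⟨c, rfl⟩
  simp [hv] at hw

noncomputable def evalPair {σ R : Type*} [CommSemiring R] [DecidableEq σ] (i j : σ) :
    MvPolynomial σ R →ₗ[R] R :=
  (aeval (Pi.single i 1 + Pi.single j 1)).toLinearMap

noncomputable def k4Separator : MvPolynomial (Fin 6) ℤ →ₗ[ℤ] ℤ :=
  evalPair 0 3 + evalPair 1 4 + evalPair 2 5
    - evalPair 0 1 - evalPair 0 2 - evalPair 1 2 - evalPair 3 4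

theorem k4Separator_K4minors (i : Fin 6) : k4Separator (K4minors i) = 0 := by
  fin_cases i <;> simp [K4minors, k4Separator, evalPair]

theorem k4Separator_X_mul_X : k4Separator (X 0 * X 3) = 1 := by
  simp [k4Separator, evalPair]

theorem stmt_15 :
    ¬ ∃ n : Fin 6 → ℤ,
        X (0 : Fin 6) * X (3 : Fin 6) = ∑ i, n i • K4minors i :=
  not_exists_eq_sum_smul_of_linearMap k4Separator k4Separator_K4minors
    (by rw [k4Separator_X_mul_X]; exact one_ne_zero)
end
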